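/- arXiv:2202.09911 — 6 statements merged into one kernel-verified Lean document; each statement's English description precedes it below -/
import Mathlib

section
/- A statistic U is a strong ancillary for the model M if and only if it is a stable ancillary for M. -/
open Finset
open scoped Classical

variable {X : Type*} [Fintype X] {Θ : Type*}

/-- Marginal distribution of the statistic `U` under `P θ`. -/
noncomputable def margin {I : Type*} (P : Θ → X → ℝ) (U : X → I) (θ : Θ) (i : I) : ℝ :=
  ∑ x ∈ Finset.univ.filter (fun x => U x = i), P θ x

/-- `P` is a statistical model: each `P θ` is a probability distribution on `X`. -/
def IsModel (P : Θ → X → ℝ) : Prop :=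
  (∀ θ x, 0 ≤ P θ x) ∧ ∀ θ, ∑ x, P θ x = 1

/-- A statistic is ancillary when its marginal distribution is parameter free. -/
def Ancillary {I : Type*} (P : Θ → X → ℝ) (U : X → I) : Prop :=
  ∀ θ₁ θ₂ i, margin P U θ₁ i = margin P U θ₂ i

/-- The mixture model `Σ_i p_i M_{|V=i}` (as a density on `X`). -/
noncomputable def mix (P : Θ → X → ℝ) (V : X → ℕ) (p : ℕ → ℝ) : Θ → X → ℝ :=
  fun θ x => p (V x) * (P θ x / margin P V θ (V x))

/-- `p` is a probability distribution on the values of `V`, supported where `P_V > 0`. -/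
def ProbWts (P : Θ → X → ℝ) (V : X → ℕ) (p : ℕ → ℝ) : Prop :=
  (∀ i, 0 ≤ p i) ∧ (∑' i, p i) = 1 ∧ ∀ θ i, 0 < p i → 0 < margin P V θ i

/-- `U` is stable: changing the distribution of any other ancillary leaves `U` ancillary. -/
def StableAnc (P : Θ → X → ℝ) (U : X → ℕ) : Prop :=
  Ancillary P U ∧ ∀ (V : X → ℕ) (p : ℕ → ℝ),
    Ancillary P V → ProbWts P V p → Ancillary (mix P V p) U

/-- `U` is strong: changing the distribution of `U` leaves every ancillary ancillary. -/
def StrongAnc (P : Θ → X → ℝ) (U : X → ℕ) : Prop :=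
  Ancillary P U ∧ ∀ (V : X → ℕ) (p : ℕ → ℝ),
    Ancillary P V → ProbWts P U p → Ancillary (mix P U p) V

/-- `U` is a function of `V`. -/
def FunctionOf {I J : Type*} (U : X → I) (V : X → J) : Prop :=
  ∃ h : J → I, ∀ x, U x = h (V x)

/-- A maximal ancillary: any ancillary of which it is a function is a 1-1 relabelling. -/
def MaximalAnc (P : Θ → X → ℝ) (V : X → ℕ) : Prop :=
  Ancillary P V ∧ ∀ W : X → ℕ, Ancillary P W → FunctionOf V W →
    ∀ x y, V x = V y → W x = W y

/-- A minimal ancillary: a function of every maximal ancillary. -/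
def MinimalAnc (P : Θ → X → ℝ) (U : X → ℕ) : Prop :=
  Ancillary P U ∧ ∀ V : X → ℕ, MaximalAnc P V → FunctionOf U V

/-- Joint mass of `(U,V)` at `(i,j)` under `P θ`. -/
noncomputable def jointSum (P : Θ → X → ℝ) (U V : X → ℕ) (θ : Θ) (i j : ℕ) : ℝ :=
  ∑ x ∈ Finset.univ.filter (fun x => U x = i ∧ V x = j), P θ x

lemma margin_nonneg (P : Θ → X → ℝ) (hP : IsModel P) (U : X → ℕ) (θ : Θ) (i : ℕ) :
    0 ≤ margin P U θ i :=
  Finset.sum_nonneg fun x _ => hP.1 θ x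

lemma jointSum_comm (P : Θ → X → ℝ) (U V : X → ℕ) (θ : Θ) (i j : ℕ) :
    jointSum P U V θ i j = jointSum P V U θ j i := by
  unfold jointSum
  apply Finset.sum_congr _ fun _ _ => rfl
  exact Finset.filter_congr fun x _ => by tauto

lemma jointSum_eq_zero (P : Θ → X → ℝ) (hP : IsModel P) (U V : X → ℕ) (θ : Θ) (i j : ℕ)
    (h0 : margin P U θ i = 0) : jointSum P U V θ i j = 0 := by
  simp only [margin] at h0
  have hz := (Finset.sum_eq_zero_iff_of_nonneg fun x _ => hP.1 θ x).mp h0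
  refine Finset.sum_eq_zero fun x hx => ?_
  simp only [Finset.mem_filter, Finset.mem_univ, true_and] at hx
  exact hz x (by simp [hx.1])

/-- If the joint distribution of `(U,V)` is parameter free and `U` is ancillary,
then `V` is ancillary for every mixture over `U`. -/
lemma anc_mix_of_joint (P : Θ → X → ℝ) (U V : X → ℕ) (hU : Ancillary P U)
    (hq : ∀ θ₁ θ₂ i j, jointSum P U V θ₁ i j = jointSum P U V θ₂ i j) (p : ℕ → ℝ) :
    Ancillary (mix P U p) V := by
  intro θ₁ θ₂ j
  have key : ∀ θ, margin (mix P U p) V θ j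
      = ∑ i ∈ Finset.univ.image U, p i * (jointSum P U V θ i j / margin P U θ i) := by
    intro θ
    have expand : margin (mix P U p) V θ j
        = ∑ x ∈ Finset.univ.filter (fun x => V x = j),
            p (U x) * (P θ x / margin P U θ (U x)) := by
      simp only [margin, mix]
      congr! 1
      ext x
      simp
    rw [expand, ← Finset.sum_fiberwise_of_maps_to (g := U) (t := Finset.univ.image U)
      (fun x _ => Finset.mem_image_of_mem U (Finset.mem_univ x))]
    refine Finset.sum_congr rfl fun i _ => ?_
    have hsum : ∑ x ∈ (Finset.univ.filter (fun x => V x = j)).filter (fun x => U x = i), P θ x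
        = jointSum P U V θ i j := by
      refine Finset.sum_congr ?_ fun _ _ => rfl
      rw [Finset.filter_filter]
      exact Finset.filter_congr fun x _ => by tauto
    calc ∑ x ∈ (Finset.univ.filter (fun x => V x = j)).filter (fun x => U x = i),
            p (U x) * (P θ x / margin P U θ (U x))
        = ∑ x ∈ (Finset.univ.filter (fun x => V x = j)).filter (fun x => U x = i),
            p i * (P θ x / margin P U θ i) := by
          refine Finset.sum_congr rfl fun x hx => ?_
          simp only [Finset.mem_filter, Finset.mem_univ, true_and] at hx
          rw [hx.2]
      _ = p i * ((∑ x ∈ (Finset.univ.filter (fun x => V x = j)).filter (fun x => U x = i),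
            P θ x) / margin P U θ i) := by
          rw [Finset.sum_div, Finset.mul_sum]
      _ = p i * (jointSum P U V θ i j / margin P U θ i) := by rw [hsum]
  rw [key θ₁, key θ₂]
  refine Finset.sum_congr rfl fun i _ => ?_
  rw [hq θ₁ θ₂ i j, hU θ₁ θ₂ i]

/-- If every mixture over `U` leaves `V` ancillary, the joint distribution of `(U,V)`
is parameter free. -/
lemma joint_of_anc_mix (P : Θ → X → ℝ) (hP : IsModel P) (U V : X → ℕ) (hU : Ancillary P U)
    (H : ∀ p : ℕ → ℝ, ProbWts P U p → Ancillary (mix P U p) V) :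
    ∀ θ₁ θ₂ i j, jointSum P U V θ₁ i j = jointSum P U V θ₂ i j := by
  intro θ₁ θ₂ i j
  by_cases h0 : margin P U θ₁ i = 0
  · rw [jointSum_eq_zero P hP U V θ₁ i j h0,
      jointSum_eq_zero P hP U V θ₂ i j (by rw [← hU θ₁ θ₂ i]; exact h0)]
  · have hpos : ∀ θ, 0 < margin P U θ i := fun θ => by
      rw [hU θ θ₁ i]
      exact lt_of_le_of_ne (margin_nonneg P hP U θ₁ i) (Ne.symm h0)
    set p : ℕ → ℝ := fun k => if k = i then 1 else 0 with hp
    have hw : ProbWts P U p := by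
      refine ⟨fun k => by by_cases h : k = i <;> simp [hp, h], tsum_ite_eq i 1, ?_⟩
      intro θ k hk
      by_cases hki : k = i
      · subst hki; exact hpos θ
      · simp [hp, hki] at hk
    have comp : ∀ θ, margin (mix P U p) V θ j = jointSum P U V θ i j / margin P U θ i := by
      intro θ
      have expand : margin (mix P U p) V θ j
          = ∑ x ∈ Finset.univ.filter (fun x => V x = j),
              p (U x) * (P θ x / margin P U θ (U x)) := by
        simp only [margin, mix]
        congr! 1
        ext x
        simp
      have step : ∀ x, p (U x) * (P θ x / margin P U θ (U x))
          = if U x = i then P θ x / margin P U θ (U x) else 0 := fun x => by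
        by_cases h : U x = i <;> simp [hp, h]
      have hsum : ∑ x ∈ (Finset.univ.filter (fun x => V x = j)).filter (fun x => U x = i), P θ x
          = jointSum P U V θ i j := by
        refine Finset.sum_congr ?_ fun _ _ => rfl
        rw [Finset.filter_filter]
        exact Finset.filter_congr fun x _ => by tauto
      rw [expand]
      simp only [step]
      rw [← Finset.sum_filter]
      calc ∑ x ∈ (Finset.univ.filter (fun x => V x = j)).filter (fun x => U x = i),
              P θ x / margin P U θ (U x)
          = ∑ x ∈ (Finset.univ.filter (fun x => V x = j)).filter (fun x => U x = i),
              P θ x / margin P U θ i := by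
            refine Finset.sum_congr rfl fun x hx => ?_
            simp only [Finset.mem_filter, Finset.mem_univ, true_and] at hx
            rw [hx.2]
        _ = jointSum P U V θ i j / margin P U θ i := by rw [← Finset.sum_div, hsum]
    have hanc := H p hw θ₁ θ₂ j
    rw [comp θ₁, comp θ₂, hU θ₂ θ₁ i] at hanc
    have ha := ne_of_gt (hpos θ₁)
    field_simp at hanc
    exact hanc

/-- Proposition 1: `U` is a strong ancillary for `M` iff it is a stable ancillary for `M`. -/
theorem strong_iff_stable (P : Θ → X → ℝ) (hP : IsModel P) (U : X → ℕ) :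
    StrongAnc P U ↔ StableAnc P U := by
  constructor
  · rintro ⟨hU, hS⟩
    refine ⟨hU, fun V p hV hw => ?_⟩
    have hq := joint_of_anc_mix P hP U V hU (fun q hq' => hS V q hV hq')
    exact anc_mix_of_joint P V U hV
      (fun θ₁ θ₂ j i => by
        rw [← jointSum_comm P U V θ₁ i j, ← jointSum_comm P U V θ₂ i j]; exact hq θ₁ θ₂ i j) p
  · rintro ⟨hU, hT⟩
    refine ⟨hU, fun V p hV hw => ?_⟩
    have hq := joint_of_anc_mix P hP V U hV (fun q hq' => hT V q hV hq')
    exact anc_mix_of_joint P U V hU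
      (fun θ₁ θ₂ i j => by
        rw [jointSum_comm P U V θ₁ i j, jointSum_comm P U V θ₂ i j]; exact hq θ₁ θ₂ j i) p
end

section
/- The collection of ancillary subsets that conform with every ancillary subset forms a σ-algebra (in the finite case, an algebra of sets): it contains ∅ and X and is closed under complements and intersections. -/
open Finset
open scoped Classical

variable {X : Type*} [Fintype X] [DecidableEq X] {Θ : Type*}

/-- A subset `A ⊆ X` is ancillary when its probability is constant in `θ`. -/
def AncSet (P : Θ → X → ℝ) (A : Finset X) : Prop :=
  ∀ θ₁ θ₂, ∑ x ∈ A, P θ₁ x = ∑ x ∈ A, P θ₂ x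

/-- `A` belongs to `Γ₀`: `A` is ancillary and conforms with every ancillary subset. -/
def MemGamma0 (P : Θ → X → ℝ) (A : Finset X) : Prop :=
  AncSet P A ∧ ∀ B : Finset X, AncSet P B → AncSet P (A ∩ B)

lemma compl_inter_eq_sdiff (A B : Finset X) : Aᶜ ∩ B = B \ A := by
  ext x; simp [and_comm]

lemma sum_compl_inter (f : X → ℝ) (A B : Finset X) :
    ∑ x ∈ Aᶜ ∩ B, f x = ∑ x ∈ B, f x - ∑ x ∈ B ∩ A, f x := by
  rw [compl_inter_eq_sdiff, eq_sub_iff_add_eq, add_comm,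
    Finset.sum_inter_add_sum_sdiff]

/-- `Γ₀`, the collection of ancillary subsets conforming with every ancillary subset,
is an algebra of sets: it contains `∅` and `X` and is closed under complements and
intersections. -/
theorem gamma0_isAlgebra (P : Θ → X → ℝ)
    (hP : (∀ θ x, 0 ≤ P θ x) ∧ ∀ θ, ∑ x, P θ x = 1) :
    MemGamma0 P (∅ : Finset X) ∧ MemGamma0 P (Finset.univ : Finset X) ∧
    (∀ A : Finset X, MemGamma0 P A → MemGamma0 P Aᶜ) ∧
    (∀ A B : Finset X, MemGamma0 P A → MemGamma0 P B → MemGamma0 P (A ∩ B)) := by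
  obtain ⟨-, hP1⟩ := hP
  refine ⟨⟨fun _ _ => rfl, fun B _ _ _ => by simp⟩,
    ⟨fun θ₁ θ₂ => by rw [hP1, hP1], fun B hB => by simpa using hB⟩,
    fun A hA => ?_, fun A B hA hB => ?_⟩
  · refine ⟨fun θ₁ θ₂ => ?_, fun B hB θ₁ θ₂ => ?_⟩
    · have := hA.1 θ₁ θ₂
      have h2 : ∀ θ, ∑ x ∈ Aᶜ, P θ x = 1 - ∑ x ∈ A, P θ x := by
        intro θ
        have := sum_compl_inter (P θ) A univ
        simpa [hP1 θ] using this
      rw [h2, h2, this]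
    · rw [sum_compl_inter, sum_compl_inter, hB θ₁ θ₂, Finset.inter_comm B A,
        hA.2 B hB θ₁ θ₂]
  · refine ⟨hA.2 B hB.1, fun C hC θ₁ θ₂ => ?_⟩
    rw [Finset.inter_assoc]
    exact hA.2 (B ∩ C) (hB.2 C hC) θ₁ θ₂
end

section
/- The relation SC (stable conditionality) on inference bases is an equivalence relation: it is reflexive, symmetric, and transitive. -/
open Finset
open scoped Classical

variable {Θ : Type*}

/-- An inference base: a model on a finite sample space, observed data `x`, a
designated statistic `T` (intended: a minimal sufficient statistic) and a function
`g` of `T` (intended: the laminal ancillary `L = g ∘ T`). -/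
structure IB (Θ : Type*) where
  X : Type
  [finX : Fintype X]
  P : Θ → X → ℝ
  x : X
  Tspace : Type
  [finT : Fintype Tspace]
  T : X → Tspace
  g : Tspace → ℕ

attribute [instance] IB.finX IB.finT

/-- The model of the statistic `T`. -/
noncomputable def PT (I : IB Θ) (θ : Θ) (t : I.Tspace) : ℝ :=
  ∑ x ∈ Finset.univ.filter (fun x => I.T x = t), I.P θ x

/-- The conditional model of `T` given the value `L(x) = g(T(x))` of the laminal. -/
noncomputable def condT (I : IB Θ) (θ : Θ) (t : I.Tspace) : ℝ :=
  if I.g t = I.g (I.T I.x) then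
    PT I θ t / ∑ s ∈ Finset.univ.filter (fun s => I.g s = I.g (I.T I.x)), PT I θ s
  else 0

/-- `P` is a statistical model. -/
def IsModelIB (I : IB Θ) : Prop :=
  (∀ θ x, 0 ≤ I.P θ x) ∧ ∀ θ, ∑ x, I.P θ x = 1

/-- `T` is a minimal sufficient statistic for the model. -/
def IsMSS (I : IB Θ) : Prop :=
  ∀ x y, I.T x = I.T y ↔ ∃ c : ℝ, 0 < c ∧ ∀ θ, I.P θ x = c * I.P θ y

/-- Ancillarity of a statistic `U` for a model `Q` on a finite space `Y`. -/
def AncillaryOn {Y : Type*} [Fintype Y] {K : Type*} (Q : Θ → Y → ℝ) (U : Y → K) : Prop :=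
  ∀ θ₁ θ₂ i, (∑ y ∈ Finset.univ.filter (fun y => U y = i), Q θ₁ y) =
    ∑ y ∈ Finset.univ.filter (fun y => U y = i), Q θ₂ y

/-- `U` is a function of `V`. -/
def FunctionOfOn {Y : Type*} {K K' : Type*} (U : Y → K) (V : Y → K') : Prop :=
  ∃ h : K' → K, ∀ y, U y = h (V y)

/-- A maximal ancillary for a model `Q`. -/
def MaximalOn {Y : Type*} [Fintype Y] (Q : Θ → Y → ℝ) (V : Y → ℕ) : Prop :=
  AncillaryOn Q V ∧ ∀ W : Y → ℕ, AncillaryOn Q W → FunctionOfOn V W →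
    ∀ y y', V y = V y' → W y = W y'

/-- A minimal ancillary for a model `Q`: a function of every maximal ancillary. -/
def MinimalOn {Y : Type*} [Fintype Y] {K : Type*} (Q : Θ → Y → ℝ) (U : Y → K) : Prop :=
  AncillaryOn Q U ∧ ∀ V : Y → ℕ, MaximalOn Q V → FunctionOfOn U V

/-- `g` is the laminal ancillary for the model of `T`: it is a minimal ancillary of
which every minimal ancillary is a function. -/
def IsLaminal (I : IB Θ) : Prop :=
  MinimalOn (PT I) I.g ∧ ∀ U : I.Tspace → ℕ, MinimalOn (PT I) U → FunctionOfOn U I.g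

/-- Inference bases whose `T` is minimal sufficient and whose `g ∘ T` is the laminal
ancillary. -/
def GIB (Θ : Type*) := {I : IB Θ // IsModelIB I ∧ IsMSS I ∧ IsLaminal I}

/-- The stable conditionality relation `SC`: there is a 1-1 onto relabelling `h` of the
minimal sufficient statistics under which the conditional models given the laminal
ancillary values agree, as do the observed values. -/
def SCrel (I₁ I₂ : GIB Θ) : Prop :=
  ∃ h : I₂.1.Tspace ≃ I₁.1.Tspace,
    (∀ θ s, condT I₁.1 θ s = condT I₂.1 θ (h.symm s)) ∧
    I₁.1.T I₁.1.x = h (I₂.1.T I₂.1.x)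

/-- Proposition 3: `SC` is an equivalence relation on the set of inference bases. -/
theorem SC_equivalence : Equivalence (SCrel (Θ := Θ)) := by
  constructor
  · intro I
    exact ⟨Equiv.refl _, fun θ s => rfl, rfl⟩
  · rintro I J ⟨h, hc, hx⟩
    refine ⟨h.symm, fun θ s => ?_, ?_⟩
    · have := hc θ (h s)
      simpa using this.symm
    · simp [hx]
  · rintro I J K ⟨h, hc, hx⟩ ⟨h', hc', hx'⟩
    refine ⟨h'.trans h, fun θ s => ?_, ?_⟩
    · rw [hc θ s, hc' θ (h.symm s)]; rfl
    · simp [hx, hx']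
end

section
/- As relations on the set of inference bases, S ⊆ SC: if two inference bases are equivalent under the sufficiency principle S, then they are equivalent under the stable conditionality principle SC. -/
open Finset
open scoped Classical

variable {Θ : Type*}

/-- The sufficiency relation `S`: the models of the minimal sufficient statistics and
their observed values agree under a 1-1 onto relabelling `h`. -/
def Srel (I₁ I₂ : GIB Θ) : Prop :=
  ∃ h : I₂.1.Tspace ≃ I₁.1.Tspace,
    (∀ θ s, PT I₁.1 θ s = PT I₂.1 θ (h.symm s)) ∧
    I₁.1.T I₁.1.x = h (I₂.1.T I₂.1.x)

section Transfer
variable {Y₁ Y₂ : Type*} [Fintype Y₁] [Fintype Y₂]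

lemma anc_transfer (e : Y₁ ≃ Y₂) (Q₁ : Θ → Y₁ → ℝ) (Q₂ : Θ → Y₂ → ℝ)
    (hQ : ∀ θ t, Q₁ θ t = Q₂ θ (e t)) {K : Type*} (U : Y₂ → K)
    (hU : AncillaryOn Q₂ U) : AncillaryOn Q₁ (U ∘ e) := by
  intro θ₁ θ₂ i
  have key : ∀ θ, (∑ y ∈ Finset.univ.filter (fun y => (U ∘ e) y = i), Q₁ θ y)
      = ∑ y ∈ Finset.univ.filter (fun y => U y = i), Q₂ θ y := by
    intro θ
    refine Finset.sum_equiv e ?_ ?_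
    · intro y; simp [Function.comp]
    · intro y _; exact hQ θ y
  rw [key, key]; exact hU θ₁ θ₂ i

lemma max_transfer (e : Y₁ ≃ Y₂) (Q₁ : Θ → Y₁ → ℝ) (Q₂ : Θ → Y₂ → ℝ)
    (hQ : ∀ θ t, Q₁ θ t = Q₂ θ (e t)) (V : Y₂ → ℕ)
    (hV : MaximalOn Q₂ V) : MaximalOn Q₁ (V ∘ e) := by
  refine ⟨anc_transfer e Q₁ Q₂ hQ V hV.1, ?_⟩
  intro W hW hfun y y' hVe
  have hQ' : ∀ θ t, Q₂ θ t = Q₁ θ (e.symm t) := by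
    intro θ t; rw [hQ θ (e.symm t)]; simp
  have hWanc : AncillaryOn Q₂ (W ∘ e.symm) := anc_transfer e.symm Q₂ Q₁ hQ' W hW
  obtain ⟨f, hf⟩ := hfun
  have hfun' : FunctionOfOn V (W ∘ e.symm) := by
    refine ⟨f, fun t => ?_⟩
    have := hf (e.symm t)
    simpa using this
  have := hV.2 (W ∘ e.symm) hWanc hfun' (e y) (e y') hVe
  simpa using this

lemma min_transfer (e : Y₁ ≃ Y₂) (Q₁ : Θ → Y₁ → ℝ) (Q₂ : Θ → Y₂ → ℝ)
    (hQ : ∀ θ t, Q₁ θ t = Q₂ θ (e t)) {K : Type*} (U : Y₂ → K)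
    (hU : MinimalOn Q₂ U) : MinimalOn Q₁ (U ∘ e) := by
  refine ⟨anc_transfer e Q₁ Q₂ hQ U hU.1, ?_⟩
  intro V hV
  have hQ' : ∀ θ t, Q₂ θ t = Q₁ θ (e.symm t) := by
    intro θ t; rw [hQ θ (e.symm t)]; simp
  have hVmax : MaximalOn Q₂ (V ∘ e.symm) := max_transfer e.symm Q₂ Q₁ hQ' V hV
  obtain ⟨f, hf⟩ := hU.2 (V ∘ e.symm) hVmax
  refine ⟨f, fun y => ?_⟩
  have := hf (e y)
  simpa using this

end Transfer

/-- Proposition 4: as relations on the set of all inference bases, `S ⊆ SC`. -/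
theorem S_subset_SC (I₁ I₂ : GIB Θ) (h : Srel I₁ I₂) : SCrel I₁ I₂ := by
  obtain ⟨h, hPT, hx⟩ := h
  refine ⟨h, ?_, hx⟩
  have hL₁ := I₁.2.2.2
  have hL₂ := I₂.2.2.2
  have hQ₂₁ : ∀ θ t, PT I₂.1 θ t = PT I₁.1 θ (h t) := by
    intro θ t; rw [hPT θ (h t)]; simp
  have hmin1 : MinimalOn (PT I₂.1) (I₁.1.g ∘ h) :=
    min_transfer h (PT I₂.1) (PT I₁.1) hQ₂₁ I₁.1.g hL₁.1
  have hmin2 : MinimalOn (PT I₁.1) (I₂.1.g ∘ h.symm) :=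
    min_transfer h.symm (PT I₁.1) (PT I₂.1) hPT I₂.1.g hL₂.1
  obtain ⟨φ, hφ⟩ := hL₁.2 _ hmin2
  obtain ⟨ψ, hψ⟩ := hL₂.2 _ hmin1
  -- hφ : ∀ s, (I₂.1.g ∘ h.symm) s = φ (I₁.1.g s)
  -- hψ : ∀ t, (I₁.1.g ∘ h) t = ψ (I₂.1.g t)
  have key : ∀ s, I₁.1.g s = I₁.1.g (I₁.1.T I₁.1.x) ↔
      I₂.1.g (h.symm s) = I₂.1.g (I₂.1.T I₂.1.x) := by
    intro s
    constructor
    · intro hc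
      have h1 : I₂.1.g (h.symm s) = φ (I₁.1.g s) := hφ s
      have h2 : I₂.1.g (h.symm (h (I₂.1.T I₂.1.x))) = φ (I₁.1.g (h (I₂.1.T I₂.1.x))) :=
        hφ (h (I₂.1.T I₂.1.x))
      rw [hx] at hc
      rw [h1, hc, ← h2, Equiv.symm_apply_apply]
    · intro hc
      have h1 : I₁.1.g (h (h.symm s)) = ψ (I₂.1.g (h.symm s)) := hψ (h.symm s)
      have h2 : I₁.1.g (h (I₂.1.T I₂.1.x)) = ψ (I₂.1.g (I₂.1.T I₂.1.x)) :=
        hψ (I₂.1.T I₂.1.x)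
      rw [Equiv.apply_symm_apply] at h1
      rw [hx, h1, hc, ← h2]
  intro θ s
  unfold condT
  by_cases hc : I₁.1.g s = I₁.1.g (I₁.1.T I₁.1.x)
  · rw [if_pos hc, if_pos ((key s).mp hc), hPT]
    congr 1
    refine Finset.sum_equiv h.symm ?_ ?_
    · intro u
      simp only [Finset.mem_filter, Finset.mem_univ, true_and]
      exact key u
    · intro u _; exact hPT θ u
  · rw [if_neg hc, if_neg (fun hc2 => hc ((key s).mpr hc2))]
end

section
/- If two inference bases are equivalent under SC, then their conditional inference bases given the laminal ancillaries are equivalent under S. -/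
open Finset
open scoped Classical

variable {Θ : Type*}

/-- The sufficiency equivalence relation on points of a model. -/
def sRelOn {Y : Type*} (Q : Θ → Y → ℝ) (y y' : Y) : Prop :=
  ∃ c : ℝ, 0 < c ∧ ∀ θ, Q θ y = c * Q θ y'

/-- The probability of the sufficiency class of `y` (the model of the canonical
minimal sufficient statistic). -/
noncomputable def clsSum {Y : Type*} [Fintype Y] (Q : Θ → Y → ℝ) (θ : Θ) (y : Y) : ℝ :=
  ∑ y' ∈ Finset.univ.filter (fun y' => sRelOn Q y' y), Q θ y'

/-- Equivalence of inference bases `(Q₁, y₁)`, `(Q₂, y₂)` under the sufficiency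
principle `S`: a map matching the sufficiency classes bijectively, matching their
probabilities under every `θ`, and matching the observed minimal sufficient values. -/
def SEquiv {Y₁ Y₂ : Type*} [Fintype Y₁] [Fintype Y₂]
    (Q₁ : Θ → Y₁ → ℝ) (y₁ : Y₁) (Q₂ : Θ → Y₂ → ℝ) (y₂ : Y₂) : Prop :=
  ∃ h : Y₂ → Y₁,
    (∀ a b, sRelOn Q₂ a b ↔ sRelOn Q₁ (h a) (h b)) ∧
    (∀ y : Y₁, ∃ a, sRelOn Q₁ y (h a)) ∧
    (∀ θ a, clsSum Q₁ θ (h a) = clsSum Q₂ θ a) ∧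
    sRelOn Q₁ y₁ (h y₂)

/-- Proposition 5: if two inference bases are equivalent under `SC`, then the
conditional inference bases given the laminal ancillaries are equivalent under `S`. -/
theorem SC_implies_conditional_S (I₁ I₂ : GIB Θ) (h : SCrel I₁ I₂) :
    SEquiv (condT I₁.1) (I₁.1.T I₁.1.x) (condT I₂.1) (I₂.1.T I₂.1.x) := by
  obtain ⟨h, hcond, hobs⟩ := h
  have key : ∀ θ a, condT I₁.1 θ (h a) = condT I₂.1 θ a := by
    intro θ a
    rw [hcond θ (h a), Equiv.symm_apply_apply]
  have hrel : ∀ a b, sRelOn (condT I₂.1) a b ↔ sRelOn (condT I₁.1) (h a) (h b) := by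
    intro a b
    constructor
    · rintro ⟨c, hc, hcab⟩
      exact ⟨c, hc, fun θ => by rw [key, key]; exact hcab θ⟩
    · rintro ⟨c, hc, hcab⟩
      exact ⟨c, hc, fun θ => by rw [← key, ← key]; exact hcab θ⟩
  refine ⟨h, hrel, ?_, ?_, ?_⟩
  · intro y
    exact ⟨h.symm y, 1, one_pos, fun θ => by rw [h.apply_symm_apply, one_mul]⟩
  · intro θ a
    unfold clsSum
    rw [Finset.sum_filter, Finset.sum_filter]
    apply Fintype.sum_equiv h.symm
    intro y
    have : sRelOn (condT I₁.1) y (h a) ↔ sRelOn (condT I₂.1) (h.symm y) a := by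
      rw [hrel, h.apply_symm_apply]
    rw [← key θ (h.symm y), h.apply_symm_apply]
    by_cases hy : sRelOn (condT I₁.1) y (h a)
    · rw [if_pos hy, if_pos (this.mp hy)]
    · rw [if_neg hy, if_neg (fun hc => hy (this.mpr hc))]
  · exact ⟨1, one_pos, fun θ => by rw [hobs, one_mul]⟩
end

section
/- For a model M with minimal sufficient statistic T and laminal ancillary L = g∘T, the identity statistic on the conditional sample space {t : g(t) = g(T(x))} is minimal sufficient for the conditional model {P_{θ,T|L(x)} : θ ∈ Θ}; that is, no two distinct points t_1 ≠ t_2 in this set satisfy P_{θ,T|L(x)}({t_1}) = c · P_{θ,T|L(x)}({t_2}) for all θ for some constant c > 0. -/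
open Finset
open scoped Classical

/-- For a model `Q` for a minimal sufficient statistic on `T` (no two distinct points
have proportional likelihoods) and an ancillary `L = g ∘ T` with positive probability
on the observed cell, the identity is minimal sufficient for the conditional model
given `L`: no two distinct points of `{t : g t = g t₀}` have proportional conditional
likelihoods. -/
theorem identity_mss_for_conditional {T : Type*} [Fintype T] {Θ : Type*}
    (Q : Θ → T → ℝ) (hQ : (∀ θ t, 0 ≤ Q θ t) ∧ ∀ θ, ∑ t, Q θ t = 1)
    (hmss : ∀ t₁ t₂ : T, (∃ c : ℝ, 0 < c ∧ ∀ θ, Q θ t₁ = c * Q θ t₂) → t₁ = t₂)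
    (g : T → ℕ) (t₀ : T)
    (hanc : ∀ θ₁ θ₂ i, (∑ t ∈ Finset.univ.filter (fun t => g t = i), Q θ₁ t) =
      ∑ t ∈ Finset.univ.filter (fun t => g t = i), Q θ₂ t)
    (hpos : ∀ θ, 0 < ∑ t ∈ Finset.univ.filter (fun t => g t = g t₀), Q θ t) :
    ∀ t₁ t₂ : T, g t₁ = g t₀ → g t₂ = g t₀ →
      (∃ c : ℝ, 0 < c ∧ ∀ θ,
        Q θ t₁ / (∑ t ∈ Finset.univ.filter (fun t => g t = g t₀), Q θ t) =
        c * (Q θ t₂ / (∑ t ∈ Finset.univ.filter (fun t => g t = g t₀), Q θ t))) →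
      t₁ = t₂ := by
  rintro t₁ t₂ h₁ h₂ ⟨c, hc, hprop⟩
  apply hmss
  refine ⟨c, hc, fun θ => ?_⟩
  have hS := (hpos θ).ne'
  have := hprop θ
  field_simp at this
  exact this
end
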